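/- Negami-like splitting for the quantum reliability operator: if G is the union of graphs K and H sharing only the vertices U = {u_1,…,u_m}, then Q̂R_G = Σ_{γ,γ' ∈ Γ(U)} β_{γ,γ'} Q̂R_{K/γ} ⊗ Q̂R_{H/γ'}, where (β_{γ,γ'}) is the inverse of the connectivity matrix (α_{γ,γ'}). -/

import Mathlib

open scoped Classical
noncomputable section

/-- A finite set has finitely many setoids (partitions). -/
instance setoidFinite (U : Type) [Finite U] : Finite (Setoid U) :=
  Finite.of_injective (fun s => s.r)
    (fun _ _ h => Setoid.ext fun x y => iff_of_eq (congrFun (congrFun h x) y))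

noncomputable instance setoidFintype (U : Type) [Finite U] : Fintype (Setoid U) :=
  Fintype.ofFinite _

/-- Adjacency via an operating edge of the state `ε`. -/
def edgeAdj {V E : Type} (s t : E → V) (ε : E → Bool) (x y : V) : Prop :=
  ∃ e, ε e = true ∧ ((s e = x ∧ t e = y) ∨ (s e = y ∧ t e = x))

/-- Connectivity of the spanning subgraph determined by `ε`, on the vertex set `S`,
after further identifying vertices via the relation `σ`. -/
def ConnectedModOn {V E : Type} (S : Set V) (s t : E → V) (σ : V → V → Prop)
    (ε : E → Bool) : Prop :=
  ∀ x ∈ S, ∀ y ∈ S, Relation.EqvGen (fun a b => edgeAdj s t ε a b ∨ σ a b) x y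

/-- A state is connected if the spanning subgraph of operating edges is connected. -/
def ConnectedState {V E : Type} (S : Set V) (s t : E → V) (ε : E → Bool) : Prop :=
  ConnectedModOn S s t (fun _ _ => False) ε

/-- The identification relation on vertices induced by a partition (setoid) `γ` of `U`. -/
def partRel {V : Type} (U : Set V) (γ : Setoid ↥U) : V → V → Prop :=
  fun a b => ∃ (ha : a ∈ U) (hb : b ∈ U), γ.r ⟨a, ha⟩ ⟨b, hb⟩

/-- The state `ε` has no islands: every vertex of `S` is joined to some vertex of `U`. -/
def NoIslands {V E : Type} (S U : Set V) (s t : E → V) (ε : E → Bool) : Prop :=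
  ∀ x ∈ S, ∃ u ∈ U, Relation.EqvGen (edgeAdj s t ε) x u

/-- The partition `P(ε)` of `U` induced by the connected components of the state `ε`. -/
def inducedPart {V E : Type} (U : Set V) (s t : E → V) (ε : E → Bool) : Setoid ↥U :=
  ⟨fun u u' => Relation.EqvGen (edgeAdj s t ε) u.1 u'.1,
    ⟨fun u => Relation.EqvGen.refl u.1,
     fun h => Relation.EqvGen.symm _ _ h,
     fun h h' => Relation.EqvGen.trans _ _ _ h h'⟩⟩

/-- Probability of the classical state `ε` given Bernoulli parameters `p`. -/
def stProb {E : Type} [Fintype E] (p : E → ℝ) (ε : E → Bool) : ℝ :=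
  ∏ e, if ε e then p e else 1 - p e

/-- Reliability: probability that the random state satisfies the connectivity
predicate `Conn`. -/
def relOf {E : Type} [Fintype E] (p : E → ℝ) (Conn : (E → Bool) → Prop) : ℝ :=
  ∑ ε : E → Bool, if Conn ε then stProb p ε else 0

/-- The hermitian inner product of `ℓ²_ℂ(Λ)`, antilinear in the first argument. -/
def qdot {Λ : Type} [Fintype Λ] (x y : Λ → ℂ) : ℂ :=
  ∑ ε, (starRingEnd ℂ) (x ε) * y ε

/-- The orthogonal projection of `ℓ²_ℂ(Λ)` onto the span of `{|ε⟩ : ε ∈ C}`. -/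
def projC {Λ : Type} [Fintype Λ] (C : Set Λ) : (Λ → ℂ) →ₗ[ℂ] (Λ → ℂ) where
  toFun ψ := fun ε => if ε ∈ C then ψ ε else 0
  map_add' x y := by funext ε; by_cases h : ε ∈ C <;> simp [h]
  map_smul' c x := by funext ε; by_cases h : ε ∈ C <;> simp [h]

/-- Tensor product of operators under `ℓ²(Λ₁ × Λ₂) ≅ ℓ²(Λ₁) ⊗ ℓ²(Λ₂)`. -/
def tensorOp {A B : Type} [Fintype A] [Fintype B]
    (F : (A → ℂ) →ₗ[ℂ] (A → ℂ)) (G : (B → ℂ) →ₗ[ℂ] (B → ℂ)) :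
    (A × B → ℂ) →ₗ[ℂ] (A × B → ℂ) where
  toFun ψ := fun q => ∑ x : A × B, ψ x *
    (F (fun a => if a = x.1 then 1 else 0) q.1 * G (fun b => if b = x.2 then 1 else 0) q.2)
  map_add' x y := by
    funext q
    simp [add_mul, Finset.sum_add_distrib]
  map_smul' c x := by
    funext q
    simp only [Pi.smul_apply, smul_eq_mul, RingHom.id_apply]
    rw [Finset.mul_sum]
    exact Finset.sum_congr rfl (fun x _ => by ring)

/-- Tensor product of state vectors. -/
def vtens {A B : Type} (ψ₁ : A → ℂ) (ψ₂ : B → ℂ) : A × B → ℂ :=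
  fun q => ψ₁ q.1 * ψ₂ q.2

/-- Entry of the connectivity matrix: `1` if the common coarsening of the two
partitions has a single block, `0` otherwise.  (In Mathlib's order on `Setoid U`,
the common coarsening is the join `γ ⊔ γ'`, and having a single block means `= ⊤`.) -/
def connMatrix (U : Type) [Finite U] : Matrix (Setoid U) (Setoid U) ℝ :=
  fun γ γ' => if γ ⊔ γ' = ⊤ then 1 else 0


/-! Both sides are diagonal in the basis of classical states `(ε_K, ε_H)`, so it suffices to compare
their eigenvalues. Let `P_K`, `P_H` be the partitions of `U` induced by the two halves of the state.
Since `K` and `H` meet only in `U`, the state is connected on `G` iff neither half has an island and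
`P_K ⊔ P_H = ⊤`, and `K/γ` is connected iff `K` has no island and `P_K ⊔ γ = ⊤`. The right-hand
eigenvalue is then `(α β α)_{P_K P_H}`, which equals `α_{P_K P_H}` because `β α = 1`. -/

namespace Relation.EqvGen

variable {α : Type*} {r : α → α → Prop}

theorem iff_of_invariant {p : α → Prop} (hp : ∀ a b, r a b → (p a ↔ p b)) {x y : α}
    (h : EqvGen r x y) : p x ↔ p y := by
  induction h with
  | rel a b hab => exact hp a b hab
  | refl a => rfl
  | symm a b _ ih => exact ih.symm
  | trans a b c _ _ ih₁ ih₂ => exact ih₁.trans ih₂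

theorem eq_or_mem_of_supported {B : Set α} (hr : ∀ a b, r a b → a ∈ B ∧ b ∈ B) {x y : α}
    (h : EqvGen r x y) : x = y ∨ x ∈ B :=
  or_iff_not_imp_right.2 fun hx =>
    ((h.iff_of_invariant (p := (· = x)) fun a b hab =>
      iff_of_false (fun ha => hx (ha ▸ (hr a b hab).1)) fun hb => hx (hb ▸ (hr a b hab).2)).1
        rfl).symm

end Relation.EqvGen

open Relation

section Components

variable {V : Type} {r s : V → V → Prop} {A B U : Set V}

def componentSetoid (r : V → V → Prop) (U : Set V) : Setoid U :=
  (EqvGen.setoid r).comap (↑)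

theorem componentSetoid_mono (h : ∀ a b, r a b → s a b) :
    componentSetoid r U ≤ componentSetoid s U :=
  fun _ _ huv => EqvGen.mono h _ _ huv

theorem componentSetoid_partRel (γ : Setoid U) : componentSetoid (partRel U γ) U = γ := by
  ext u v
  refine ⟨fun h => ?_, fun h => EqvGen.rel _ _ ⟨u.2, v.2, h⟩⟩
  have hinv : ∀ a b, partRel U γ a b →
      ((∃ ha : a ∈ U, γ u ⟨a, ha⟩) ↔ ∃ hb : b ∈ U, γ u ⟨b, hb⟩) := by
    rintro a b ⟨ha, hb, hab⟩
    exact ⟨fun ⟨_, h⟩ => ⟨hb, γ.trans h hab⟩, fun ⟨_, h⟩ => ⟨ha, γ.trans h (γ.symm hab)⟩⟩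
  exact ((h.iff_of_invariant hinv).1 ⟨u.2, γ.refl u⟩).2

theorem exists_rel_eqvGen_or_eqvGen_of_eqvGen (hs : ∀ a b, s a b → a ∈ B ∧ b ∈ B) (hAB : A ∩ B ⊆ U)
    {Q : Setoid U} (hQ : componentSetoid s U ≤ Q) {y z : V} (hy : y ∈ A) (hyz : EqvGen r y z)
    {w : U} (hw : EqvGen r y w ∨ EqvGen s y w) :
    ∃ w' : U, Q w w' ∧ (EqvGen r z w' ∨ EqvGen s z w') := by
  have hzy := hyz.symm
  rcases hw with hw | hw
  · exact ⟨w, Q.refl w, .inl (hzy.trans _ _ _ hw)⟩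
  rcases hw.eq_or_mem_of_supported hs with rfl | hyB
  · exact ⟨w, Q.refl w, .inl hzy⟩
  · exact ⟨⟨y, hAB ⟨hy, hyB⟩⟩, hQ hw.symm, .inl hzy⟩

theorem exists_rel_eqvGen_or_eqvGen_of_eqvGen_or (hr : ∀ a b, r a b → a ∈ A ∧ b ∈ A)
    (hs : ∀ a b, s a b → a ∈ B ∧ b ∈ B) (hAB : A ∩ B ⊆ U) (u : U) {x : V}
    (h : EqvGen (fun a b => r a b ∨ s a b) u x) :
    ∃ w : U, (componentSetoid r U ⊔ componentSetoid s U) u w ∧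
      (EqvGen r x w ∨ EqvGen s x w) := by
  set Q := componentSetoid r U ⊔ componentSetoid s U
  have hstep : ∀ {y z : V}, (y ∈ A ∧ EqvGen r y z) ∨ (y ∈ B ∧ EqvGen s y z) →
      (∃ w : U, Q u w ∧ (EqvGen r y w ∨ EqvGen s y w)) →
      ∃ w : U, Q u w ∧ (EqvGen r z w ∨ EqvGen s z w) := by
    rintro y z (⟨hy, hyz⟩ | ⟨hy, hyz⟩) ⟨w, huw, hw⟩
    · obtain ⟨w', hww', hw'⟩ := exists_rel_eqvGen_or_eqvGen_of_eqvGen hs hAB le_sup_right hy hyz hw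
      exact ⟨w', Q.trans huw hww', hw'⟩
    · obtain ⟨w', hww', hw'⟩ := exists_rel_eqvGen_or_eqvGen_of_eqvGen (r := s) hr
        (by rwa [Set.inter_comm]) le_sup_left hy hyz hw.symm
      exact ⟨w', Q.trans huw hww', hw'.symm⟩
  refine (h.iff_of_invariant (p := fun y => ∃ w : U, Q u w ∧ (EqvGen r y w ∨ EqvGen s y w))
    ?_).1 ⟨u, Q.refl u, .inl (.refl _)⟩
  rintro a b (hab | hab)
  · exact ⟨hstep (.inl ⟨(hr a b hab).1, .rel _ _ hab⟩),
      hstep (.inl ⟨(hr a b hab).2, .symm _ _ (.rel _ _ hab)⟩)⟩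
  · exact ⟨hstep (.inr ⟨(hs a b hab).1, .rel _ _ hab⟩),
      hstep (.inr ⟨(hs a b hab).2, .symm _ _ (.rel _ _ hab)⟩)⟩

theorem exists_mem_eqvGen_of_eqvGen_or_eqvGen (hs : ∀ a b, s a b → a ∈ B ∧ b ∈ B) (hAB : A ∩ B ⊆ U)
    {x : V} (hx : x ∈ A) {w : U} (hw : EqvGen r x w ∨ EqvGen s x w) :
    ∃ u ∈ U, EqvGen r x u := by
  rcases hw with hw | hw
  · exact ⟨w, w.2, hw⟩
  rcases hw.eq_or_mem_of_supported hs with hxw | hxB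
  · exact ⟨w, w.2, hxw ▸ .refl x⟩
  · exact ⟨x, hAB ⟨hx, hxB⟩, .refl x⟩

theorem eqvGen_or_total_iff (hr : ∀ a b, r a b → a ∈ A ∧ b ∈ A)
    (hs : ∀ a b, s a b → a ∈ B ∧ b ∈ B) (hAB : A ∩ B = U) (hU : U.Nonempty) :
    (∀ x ∈ A ∪ B, ∀ y ∈ A ∪ B, EqvGen (fun a b => r a b ∨ s a b) x y) ↔
      (∀ x ∈ A, ∃ u ∈ U, EqvGen r x u) ∧ (∀ x ∈ B, ∃ u ∈ U, EqvGen s x u) ∧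
        componentSetoid r U ⊔ componentSetoid s U = ⊤ := by
  set Q := componentSetoid r U ⊔ componentSetoid s U
  have hUA : U ⊆ A := hAB ▸ Set.inter_subset_left
  constructor
  · intro h
    obtain ⟨u₀, hu₀⟩ := hU
    have hreach : ∀ x ∈ A ∪ B, ∃ w : U, Q ⟨u₀, hu₀⟩ w ∧ (EqvGen r x w ∨ EqvGen s x w) :=
      fun x hx => exists_rel_eqvGen_or_eqvGen_of_eqvGen_or hr hs hAB.le _
        (h u₀ (.inl (hUA hu₀)) x hx)
    refine ⟨fun x hx => ?_, fun x hx => ?_, Setoid.eq_top_iff.2 fun u v => ?_⟩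
    · obtain ⟨w, -, hw⟩ := hreach x (.inl hx)
      exact exists_mem_eqvGen_of_eqvGen_or_eqvGen hs hAB.le hx hw
    · obtain ⟨w, -, hw⟩ := hreach x (.inr hx)
      exact exists_mem_eqvGen_of_eqvGen_or_eqvGen hr (by rw [Set.inter_comm, hAB]) hx hw.symm
    · have hQ : ∀ u : U, Q ⟨u₀, hu₀⟩ u := fun u => by
        obtain ⟨w, hw, hwu⟩ := hreach u (.inl (hUA u.2))
        refine Q.trans hw (hwu.elim (fun h => ?_) fun h => ?_)
        · exact (le_sup_left : componentSetoid r U ≤ Q) h.symm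
        · exact (le_sup_right : componentSetoid s U ≤ Q) h.symm
      exact Q.trans (Q.symm (hQ u)) (hQ v)
  · rintro ⟨hrA, hsB, htop⟩
    have hQ : Q ≤ componentSetoid (fun a b => r a b ∨ s a b) U :=
      sup_le (componentSetoid_mono fun _ _ => .inl) (componentSetoid_mono fun _ _ => .inr)
    have hreach : ∀ x ∈ A ∪ B, ∃ u : U, EqvGen (fun a b => r a b ∨ s a b) x u := by
      rintro x (hx | hx)
      · obtain ⟨u, hu, hxu⟩ := hrA x hx
        exact ⟨⟨u, hu⟩, EqvGen.mono (fun _ _ => .inl) _ _ hxu⟩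
      · obtain ⟨u, hu, hxu⟩ := hsB x hx
        exact ⟨⟨u, hu⟩, EqvGen.mono (fun _ _ => .inr) _ _ hxu⟩
    intro x hx y hy
    obtain ⟨u, hxu⟩ := hreach x hx
    obtain ⟨v, hyv⟩ := hreach y hy
    have huv : componentSetoid (fun a b => r a b ∨ s a b) U u v := hQ (Setoid.eq_top_iff.1 htop u v)
    exact hxu.trans _ _ _ (huv.trans _ _ _ hyv.symm)

end Components

section Graphs

variable {V E EK EH : Type}

theorem edgeAdj_mem {S : Set V} {s t : E → V} (hst : ∀ e, s e ∈ S ∧ t e ∈ S) (ε : E → Bool)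
    {x y : V} (h : edgeAdj s t ε x y) : x ∈ S ∧ y ∈ S := by
  obtain ⟨e, -, ⟨rfl, rfl⟩ | ⟨rfl, rfl⟩⟩ := h
  exacts [hst e, (hst e).symm]

theorem edgeAdj_sum_elim (sK tK : EK → V) (sH tH : EH → V) (εK : EK → Bool) (εH : EH → Bool)
    (x y : V) :
    edgeAdj (Sum.elim sK sH) (Sum.elim tK tH) (Sum.elim εK εH) x y ↔
      edgeAdj sK tK εK x y ∨ edgeAdj sH tH εH x y := by
  simp only [edgeAdj, Sum.exists, Sum.elim_inl, Sum.elim_inr]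

theorem inducedPart_eq_componentSetoid (U : Set V) (s t : E → V) (ε : E → Bool) :
    inducedPart U s t ε = componentSetoid (edgeAdj s t ε) U := rfl

theorem connectedModOn_partRel_iff {S U : Set V} (hUS : U ⊆ S) (hU : U.Nonempty) {s t : E → V}
    (hst : ∀ e, s e ∈ S ∧ t e ∈ S) (γ : Setoid U) (ε : E → Bool) :
    ConnectedModOn S s t (partRel U γ) ε ↔ NoIslands S U s t ε ∧ inducedPart U s t ε ⊔ γ = ⊤ := by
  have h := eqvGen_or_total_iff (fun _ _ => edgeAdj_mem hst ε)
    (fun a b (hab : partRel U γ a b) => ⟨hab.1, hab.2.1⟩) (Set.inter_eq_right.2 hUS) hU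
  rw [Set.union_eq_left.2 hUS, componentSetoid_partRel] at h
  rw [ConnectedModOn, h, inducedPart_eq_componentSetoid]
  exact and_congr_right fun _ => and_iff_right fun x hx => ⟨x, hx, .refl x⟩

theorem connectedState_sum_elim_iff {VK VH : Set V} (hcover : VK ∪ VH = Set.univ)
    (hU : (VK ∩ VH).Nonempty) {sK tK : EK → V} (hK : ∀ e, sK e ∈ VK ∧ tK e ∈ VK)
    {sH tH : EH → V} (hH : ∀ e, sH e ∈ VH ∧ tH e ∈ VH) (εK : EK → Bool) (εH : EH → Bool) :
    ConnectedState Set.univ (Sum.elim sK sH) (Sum.elim tK tH) (Sum.elim εK εH) ↔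
      NoIslands VK (VK ∩ VH) sK tK εK ∧ NoIslands VH (VK ∩ VH) sH tH εH ∧
        inducedPart (VK ∩ VH) sK tK εK ⊔ inducedPart (VK ∩ VH) sH tH εH = ⊤ := by
  have hadj : (fun a b => edgeAdj (Sum.elim sK sH) (Sum.elim tK tH) (Sum.elim εK εH) a b ∨ False)
      = fun a b => edgeAdj sK tK εK a b ∨ edgeAdj sH tH εH a b := by
    simp only [or_false, edgeAdj_sum_elim]
  rw [ConnectedState, ConnectedModOn, hadj, ← hcover]
  exact eqvGen_or_total_iff (fun _ _ => edgeAdj_mem hK εK) (fun _ _ => edgeAdj_mem hH εH) rfl hU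

end Graphs

section Operators

variable {Λ A B : Type} [Fintype Λ] [Fintype A] [Fintype B]

theorem projC_eq_lmul (C : Set Λ) : projC C = Algebra.lmul ℂ (Λ → ℂ) (C.indicator 1) := by
  ext ψ ε
  by_cases h : ε ∈ C <;> simp [projC, h]

theorem tensorOp_projC (C₁ : Set A) (C₂ : Set B) :
    tensorOp (projC C₁) (projC C₂) = projC (C₁ ×ˢ C₂) := by
  refine LinearMap.ext fun ψ => funext fun q => ?_
  simp only [tensorOp, projC, LinearMap.coe_mk, AddHom.coe_mk]
  rw [Finset.sum_eq_single q]
  · by_cases h₁ : q.1 ∈ C₁ <;> by_cases h₂ : q.2 ∈ C₂ <;> simp [h₁, h₂]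
  · intro x _ hx
    rcases not_and_or.1 (mt Prod.ext_iff.2 hx) with hx | hx <;> simp [Ne.symm hx]
  · simp

end Operators

theorem Matrix.sum_sum_mul_mul_of_mul_eq_one {n R : Type*} [Fintype n] [CommSemiring R]
    {M N : Matrix n n R} (h : N * M = 1) (i j : n) :
    ∑ k, ∑ l, M i k * N k l * M l j = M i j := by
  calc ∑ k, ∑ l, M i k * N k l * M l j = (M * N * M) i j := by
        simp only [Matrix.mul_apply, Finset.sum_mul]
        exact Finset.sum_comm
    _ = M i j := by rw [Matrix.mul_assoc, h, Matrix.mul_one]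

theorem connectedState_indicator_eq_sum {V EK EH : Type} [Finite V] {VK VH : Set V}
    (hcover : VK ∪ VH = Set.univ) (hU : (VK ∩ VH).Nonempty)
    {sK tK : EK → V} (hK : ∀ e, sK e ∈ VK ∧ tK e ∈ VK)
    {sH tH : EH → V} (hH : ∀ e, sH e ∈ VH ∧ tH e ∈ VH)
    {β : Matrix (Setoid ↥(VK ∩ VH)) (Setoid ↥(VK ∩ VH)) ℂ}
    (hβ : β * (Matrix.of fun γ γ' : Setoid ↥(VK ∩ VH) =>
            if γ ⊔ γ' = ⊤ then (1 : ℂ) else 0) = 1)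
    (εK : EK → Bool) (εH : EH → Bool) :
    (if ConnectedState Set.univ (Sum.elim sK sH) (Sum.elim tK tH) (Sum.elim εK εH)
        then (1 : ℂ) else 0) =
      ∑ γ, ∑ γ', β γ γ' *
        ((if ConnectedModOn VK sK tK (partRel (VK ∩ VH) γ) εK then 1 else 0) *
          (if ConnectedModOn VH sH tH (partRel (VK ∩ VH) γ') εH then 1 else 0)) := by
  simp only [connectedState_sum_elim_iff hcover hU hK hH,
    connectedModOn_partRel_iff Set.inter_subset_left hU hK,
    connectedModOn_partRel_iff Set.inter_subset_right hU hH]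
  by_cases hislK : NoIslands VK (VK ∩ VH) sK tK εK
  · by_cases hislH : NoIslands VH (VK ∩ VH) sH tH εH
    · have hαβα := Matrix.sum_sum_mul_mul_of_mul_eq_one hβ
        (inducedPart _ sK tK εK) (inducedPart _ sH tH εH)
      simp only [Matrix.of_apply] at hαβα
      simp only [hislK, hislH, true_and, ← hαβα]
      refine Finset.sum_congr rfl fun γ _ => Finset.sum_congr rfl fun γ' _ => ?_
      rw [sup_comm γ']
      ring
    · simp [hislH]
  · simp [hislK]

/-- the Negami-like splitting of the quantum reliability operator,
`Q̂R_G = Σ_{γ,γ'} β_{γ,γ'} Q̂R_{K/γ} ⊗ Q̂R_{H/γ'}`, where `β` is the inverse of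
the connectivity matrix. -/
theorem qr_operator_negami_splitting {V EK EH : Type}
    [Fintype V] [Fintype EK] [Fintype EH]
    (VK VH : Set V) (hcover : VK ∪ VH = Set.univ) (hU : (VK ∩ VH).Nonempty)
    (sK tK : EK → V) (hK : ∀ e, sK e ∈ VK ∧ tK e ∈ VK)
    (sH tH : EH → V) (hH : ∀ e, sH e ∈ VH ∧ tH e ∈ VH)
    (β : Matrix (Setoid ↥(VK ∩ VH)) (Setoid ↥(VK ∩ VH)) ℂ)
    (hβ : β * (Matrix.of fun γ γ' : Setoid ↥(VK ∩ VH) =>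
            if γ ⊔ γ' = ⊤ then (1 : ℂ) else 0) = 1 ∧
          (Matrix.of fun γ γ' : Setoid ↥(VK ∩ VH) =>
            if γ ⊔ γ' = ⊤ then (1 : ℂ) else 0) * β = 1) :
    projC {εp : (EK → Bool) × (EH → Bool) |
        ConnectedState Set.univ (Sum.elim sK sH) (Sum.elim tK tH)
          (Sum.elim εp.1 εp.2)}
      = ∑ γ : Setoid ↥(VK ∩ VH), ∑ γ' : Setoid ↥(VK ∩ VH),
          β γ γ' •
            tensorOp
              (projC {ε : EK → Bool |
                  ConnectedModOn VK sK tK (partRel (VK ∩ VH) γ) ε})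
              (projC {ε : EH → Bool |
                  ConnectedModOn VH sH tH (partRel (VK ∩ VH) γ') ε}) := by
  simp_rw [tensorOp_projC, projC_eq_lmul, ← map_smul, ← map_sum]
  congr 1
  funext ⟨εK, εH⟩
  simp only [Finset.sum_apply, Pi.smul_apply, smul_eq_mul, Set.indicator_prod_one]
  simp only [Set.indicator_apply, Set.mem_ofPred_eq, Pi.one_apply]
  exact connectedState_indicator_eq_sum hcover hU hK hH hβ.1 εK εH
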